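/- Let d ≥ 1 and let 𝖠 ⊆ M_d(ℝ) be compact and nonempty with a multicone (K_1,…,K_m) and transverse-defining vector w. Then there exist constants C, γ > 0 such that for every n ≥ 1, every A_1,…,A_n ∈ 𝖠, and every pair of nonzero z_1, z_2 ∈ K_1^ℂ ∪ ⋯ ∪ K_m^ℂ, the quantities ⟨A_n⋯A_1 z_1, w⟩ and ⟨A_n⋯A_1 z_2, w⟩ are nonzero and ‖ (A_n⋯A_1 z_1)/⟨A_n⋯A_1 z_1, w⟩ − (A_n⋯A_1 z_2)/⟨A_n⋯A_1 z_2, w⟩ ‖ ≤ C·e^{−γn}. -/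

import Mathlib

open scoped BigOperators Pointwise

noncomputable section

/-- The Euclidean norm of a finitely-indexed vector (real or complex entries). -/
def enorm {ι : Type*} [Fintype ι] {E : Type*} [Norm E] (u : ι → E) : ℝ :=
  Real.sqrt (∑ i, ‖u i‖ ^ 2)

/-- The operator norm of a real matrix induced by the Euclidean norm. -/
def opNorm {ι : Type*} [Fintype ι] (A : Matrix ι ι ℝ) : ℝ :=
  sSup ((fun u : ι → ℝ => _root_.enorm (A.mulVec u)) '' {u : ι → ℝ | _root_.enorm u = 1})

/-- A multicone for a set of matrices (Definition 1.2). -/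
def IsMulticone {ι : Type*} [Fintype ι] (S : Set (Matrix ι ι ℝ)) {m : ℕ}
    (K : Fin m → Set (ι → ℝ)) (w : ι → ℝ) : Prop :=
  (∀ j, IsClosed (K j)) ∧ (∀ j, Convex ℝ (K j)) ∧ (∀ j, (interior (K j)).Nonempty) ∧
  (∀ j, ∀ c : ℝ, 0 ≤ c → ∀ u ∈ K j, c • u ∈ K j) ∧
  (∑ i, w i ^ 2 = 1) ∧
  (∀ u ∈ ⋃ j, K j, u ≠ 0 → 0 < ∑ i, u i * w i) ∧
  (∀ A ∈ S, ∀ j, ∃ ℓ, ∀ u ∈ K j, u ≠ 0 →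
    A.mulVec u ∈ interior (K ℓ) ∨ -A.mulVec u ∈ interior (K ℓ)) ∧
  (∀ j₁ j₂, j₁ ≠ j₂ → K j₁ ∩ K j₂ = {0})

/-- The set of matrices is multipositive if it admits a multicone. -/
def IsMultipositive {ι : Type*} [Fintype ι] (S : Set (Matrix ι ι ℝ)) : Prop :=
  ∃ (m : ℕ) (_ : 0 < m) (K : Fin m → Set (ι → ℝ)) (w : ι → ℝ), IsMulticone S K w

/-- The semigroup generated by a set of matrices. -/
def semigroupOf {ι : Type*} [Fintype ι] [DecidableEq ι] (S : Set (Matrix ι ι ℝ)) :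
    Set (Matrix ι ι ℝ) :=
  {B | ∃ l : List (Matrix ι ι ℝ), l ≠ [] ∧ (∀ M ∈ l, M ∈ S) ∧ B = l.prod}

/-- The complexification of a set in ℝ^ι. -/
def complexify {ι : Type*} (K : Set (ι → ℝ)) : Set (ι → ℂ) :=
  {z | ∃ (c : ℂ) (u v : ι → ℝ), u ∈ K ∧ v ∈ K ∧
    z = fun i => c * (((u i : ℂ) + (v i : ℂ)) + Complex.I * ((u i : ℂ) - (v i : ℂ)))}

/-- The action of a real matrix on complex vectors. -/
def mulVecC {ι : Type*} [Fintype ι] (A : Matrix ι ι ℝ) (z : ι → ℂ) : ι → ℂ :=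
  (A.map (fun x : ℝ => (x : ℂ))).mulVec z

/-- An ℝ-cone: closed, convex, nonempty interior, positively homogeneous, proper. -/
def IsRCone {ι : Type*} [Fintype ι] (K : Set (ι → ℝ)) : Prop :=
  IsClosed K ∧ Convex ℝ K ∧ (interior K).Nonempty ∧
  (∀ c : ℝ, 0 < c → c • K = K) ∧ K ∩ (-K) = {0}

end

/-!
Write `x̂ = x / ⟨x, w⟩`. By compactness of `S` and of the slices `{x ∈ K_j | ⟨x, w⟩ = 1}` there
are `ε > 0` and interior points `v_ℓ` such that for every `A ∈ S` sending `K_j` into `±K_ℓ` and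
every `0 ≠ x ∈ K_j`, both `Âx - ε v_ℓ` and `v_ℓ - ε Âx` lie in `K_ℓ`. If `μ y ≤ x ≤ M y` in a cone,
this minorization gives the same for `A x, A y` with `M/μ - 1` multiplied by `1 - ε²`, and for
normalized vectors `‖x - y‖ ≤ 2 (M/μ - 1) / c` when `c ‖z‖ ≤ ⟨z, w⟩` on the cone.

Vectors of two different cones must first be brought into a common cone. No product `Q` of matrices
of `S` sends two distinct cones `K_p`, `K_q` into (plus or minus) their own interiors: `Q²` would
contract `K_p + K_q`, pulling `Q²ⁿ K_p` and `Q²ⁿ K_q` together, while their normalizations stay in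
disjoint compact slices. Hence, by pigeonhole on the pairs of cones visited, every word of length
`m²` sends any two cones into the same cone, and the remaining letters contract.

Finally `K_j^ℂ` consists of the vectors `λ ((1 + i) u + (1 - i) v)` with `u, v ∈ K_j`; the normalized
image of such a vector is `x̂ + τ (ŷ - x̂)` with `x = B u`, `y = B v` and `|τ| ≤ 1`, so the
complex estimate follows from the real one.
-/

open Matrix Set Filter Topology
open scoped Pointwise

namespace Multicone

variable {ι : Type*} [Fintype ι] {w : ι → ℝ}

/-- The representative of the line `ℝ x` on the hyperplane `{y | y ⬝ᵥ w = 1}`, with the junk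
value `0` when `x ⬝ᵥ w = 0`. -/
noncomputable def normalizeBy (w x : ι → ℝ) : ι → ℝ := (x ⬝ᵥ w)⁻¹ • x

lemma normalizeBy_dotProduct {x : ι → ℝ} (hx : x ⬝ᵥ w ≠ 0) : normalizeBy w x ⬝ᵥ w = 1 := by
  simp [normalizeBy, smul_dotProduct, hx]

lemma smul_normalizeBy {x : ι → ℝ} (hx : x ⬝ᵥ w ≠ 0) : (x ⬝ᵥ w) • normalizeBy w x = x := by
  simp [normalizeBy, smul_smul, hx]

lemma normalizeBy_smul {c : ℝ} (hc : c ≠ 0) (x : ι → ℝ) :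
    normalizeBy w (c • x) = normalizeBy w x := by
  rcases eq_or_ne (x ⬝ᵥ w) 0 with hx | hx
  · simp [normalizeBy, smul_dotProduct, hx]
  · simp only [normalizeBy, smul_dotProduct, smul_eq_mul, smul_smul]
    field_simp

lemma normalizeBy_neg (x : ι → ℝ) : normalizeBy w (-x) = normalizeBy w x := by
  simpa using normalizeBy_smul (w := w) (neg_ne_zero.2 one_ne_zero) x

lemma normalizeBy_mem {K : PointedCone ℝ (ι → ℝ)} {x : ι → ℝ} (hx : x ∈ K)
    (hpos : 0 ≤ x ⬝ᵥ w) : normalizeBy w x ∈ K :=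
  K.smul_mem (inv_nonneg.2 hpos) hx

def slice (w : ι → ℝ) (U : Set (ι → ℝ)) : Set (ι → ℝ) := {x ∈ U | x ⬝ᵥ w = 1}

lemma exists_mul_norm_le_dotProduct {U : Set (ι → ℝ)} (hU : IsClosed U)
    (hsmul : ∀ x ∈ U, ∀ c : ℝ, 0 ≤ c → c • x ∈ U) (hpos : ∀ x ∈ U, x ≠ 0 → 0 < x ⬝ᵥ w) :
    ∃ c > 0, ∀ x ∈ U, c * ‖x‖ ≤ x ⬝ᵥ w := by
  have hsphere : ∀ x ∈ U, x ≠ 0 → ‖x‖⁻¹ • x ∈ Metric.sphere 0 1 ∩ U := fun x hx hx0 =>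
    ⟨by simp [norm_smul, hx0], hsmul x hx _ (by positivity)⟩
  rcases (Metric.sphere (0 : ι → ℝ) 1 ∩ U).eq_empty_or_nonempty with hempty | hne
  · refine ⟨1, one_pos, fun x hx => ?_⟩
    obtain rfl : x = 0 := by_contra fun hx0 => by simpa [hempty] using hsphere x hx hx0
    simp
  obtain ⟨x₀, ⟨hx₀1, hx₀U⟩, hmin⟩ := ((isCompact_sphere 0 1).inter_right hU).exists_isMinOn hne
    (continuous_id.dotProduct continuous_const).continuousOn
  refine ⟨x₀ ⬝ᵥ w, hpos x₀ hx₀U (by rintro rfl; simp at hx₀1), fun x hx => ?_⟩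
  rcases eq_or_ne x 0 with rfl | hx0
  · simp
  have hle : x₀ ⬝ᵥ w ≤ ‖x‖⁻¹ * (x ⬝ᵥ w) := by
    simpa [smul_dotProduct] using hmin (hsphere x hx hx0)
  have hn : 0 < ‖x‖ := norm_pos_iff.2 hx0
  calc x₀ ⬝ᵥ w * ‖x‖ ≤ ‖x‖⁻¹ * (x ⬝ᵥ w) * ‖x‖ := by gcongr
    _ = x ⬝ᵥ w := by field_simp

lemma isCompact_slice {U : Set (ι → ℝ)} (hU : IsClosed U) {c : ℝ} (hc : 0 < c)
    (hcU : ∀ x ∈ U, c * ‖x‖ ≤ x ⬝ᵥ w) : IsCompact (slice w U) := by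
  refine (isCompact_closedBall 0 c⁻¹).of_isClosed_subset
    (hU.inter (isClosed_eq (continuous_id.dotProduct continuous_const) continuous_const)) ?_
  rintro x ⟨hx, hx1⟩
  rw [Metric.mem_closedBall, dist_zero_right]
  calc ‖x‖ = c⁻¹ * (c * ‖x‖) := by field_simp
    _ ≤ c⁻¹ * 1 := by gcongr; exact hx1 ▸ hcU x hx
    _ = c⁻¹ := mul_one _

lemma dotProduct_nonneg_of_mul_norm_le {U : Set (ι → ℝ)} {c : ℝ} (hc : 0 ≤ c)
    (hcU : ∀ x ∈ U, c * ‖x‖ ≤ x ⬝ᵥ w) {x : ι → ℝ} (hx : x ∈ U) : 0 ≤ x ⬝ᵥ w :=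
  (mul_nonneg hc (norm_nonneg x)).trans (hcU x hx)

lemma dotProduct_pos_of_mul_norm_le {U : Set (ι → ℝ)} {c : ℝ} (hc : 0 < c)
    (hcU : ∀ x ∈ U, c * ‖x‖ ≤ x ⬝ᵥ w) {x : ι → ℝ} (hx : x ∈ U) (hx0 : x ≠ 0) : 0 < x ⬝ᵥ w :=
  (mul_pos hc (norm_pos_iff.2 hx0)).trans_le (hcU x hx)

lemma dotProduct_pos_of_mem_interior {L : Set (ι → ℝ)} (hL : ∀ z ∈ L, 0 ≤ z ⬝ᵥ w)
    (hw : 0 < w ⬝ᵥ w) {z : ι → ℝ} (hz : z ∈ interior L) : 0 < z ⬝ᵥ w := by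
  have hlim : Tendsto (fun s : ℝ => z - s • w) (𝓝[>] 0) (𝓝 z) :=
    (Continuous.tendsto' (by fun_prop) 0 z (by simp)).mono_left nhdsWithin_le_nhds
  obtain ⟨s, hs, hs0⟩ :=
    ((hlim.eventually (mem_interior_iff_mem_nhds.1 hz)).and self_mem_nhdsWithin).exists
  have := hL _ hs
  rw [sub_dotProduct, smul_dotProduct, smul_eq_mul] at this
  nlinarith [mul_pos hs0 hw]

lemma dotProduct_pos_of_mem_interior_of_mul_norm_le {U : Set (ι → ℝ)} {c : ℝ} (hc : 0 ≤ c)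
    (hcU : ∀ x ∈ U, c * ‖x‖ ≤ x ⬝ᵥ w) (hw : 0 < w ⬝ᵥ w) {z : ι → ℝ} (hz : z ∈ interior U) :
    0 < z ⬝ᵥ w :=
  dotProduct_pos_of_mem_interior (fun _ => dotProduct_nonneg_of_mul_norm_le hc hcU) hw hz

lemma normalizeBy_mulVec_normalizeBy (B : Matrix ι ι ℝ) {u : ι → ℝ} (hu : u ⬝ᵥ w ≠ 0) :
    normalizeBy w (B *ᵥ normalizeBy w u) = normalizeBy w (B *ᵥ u) := by
  rw [show normalizeBy w u = (u ⬝ᵥ w)⁻¹ • u from rfl, mulVec_smul,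
    normalizeBy_smul (inv_ne_zero hu)]

lemma normalizeBy_mem_interior {K : PointedCone ℝ (ι → ℝ)} {z : ι → ℝ}
    (hz : z ∈ interior (K : Set (ι → ℝ))) (hpos : 0 < z ⬝ᵥ w) :
    normalizeBy w z ∈ interior (K : Set (ι → ℝ)) := by
  have h := Set.smul_mem_smul_set (a := (z ⬝ᵥ w)⁻¹) hz
  rw [← interior_smul₀ (inv_ne_zero hpos.ne')] at h
  refine interior_mono ?_ h
  rintro _ ⟨y, hy, rfl⟩
  exact K.smul_mem (inv_nonneg.2 hpos.le) hy

def MapsIntoInteriorUpToSign (A : Matrix ι ι ℝ) (K L : Set (ι → ℝ)) : Prop :=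
  MapsTo A.mulVec (K \ {0}) (interior L ∪ -interior L)

lemma mapsTo_or_mapsTo_neg {K L : Set (ι → ℝ)} {A : Matrix ι ι ℝ} (hK : Convex ℝ K)
    (hKw : ∀ u ∈ K, u ≠ 0 → 0 < u ⬝ᵥ w) (hL : ∀ z ∈ interior L, 0 < z ⬝ᵥ w)
    (hA : MapsIntoInteriorUpToSign A K L) :
    MapsTo A.mulVec (K \ {0}) (interior L) ∨ MapsTo (-A).mulVec (K \ {0}) (interior L) := by
  have hneg : ∀ z, -z ∈ interior L → z ⬝ᵥ w < 0 := fun z hz => by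
    simpa [neg_dotProduct] using hL _ hz
  by_contra! h
  simp only [MapsTo, not_forall, neg_mulVec] at h
  obtain ⟨⟨u₀, hu₀, h₀⟩, ⟨u₁, hu₁, h₁⟩⟩ := h
  have hg₀ : A *ᵥ u₀ ⬝ᵥ w < 0 := hneg _ ((hA hu₀).resolve_left h₀)
  have hg₁ : 0 < A *ᵥ u₁ ⬝ᵥ w := hL _ ((hA hu₁).resolve_right h₁)
  -- the convex combination of `u₀` and `u₁` on which `(A ·) ⬝ᵥ w` vanishes
  set t := (A *ᵥ u₁ ⬝ᵥ w) / (A *ᵥ u₁ ⬝ᵥ w - A *ᵥ u₀ ⬝ᵥ w)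
  have ht₀ : 0 < t := div_pos hg₁ (by linarith)
  have ht₁ : t < 1 := (div_lt_one (by linarith)).2 (by linarith)
  have hu : t • u₀ + (1 - t) • u₁ ∈ K := hK hu₀.1 hu₁.1 ht₀.le (by linarith) (by ring)
  have hu0 : t • u₀ + (1 - t) • u₁ ≠ 0 := by
    intro h0
    have := congrArg (· ⬝ᵥ w) h0
    simp only [add_dotProduct, smul_dotProduct, smul_eq_mul, zero_dotProduct] at this
    nlinarith [hKw u₀ hu₀.1 hu₀.2, hKw u₁ hu₁.1 hu₁.2]
  have hzero : A *ᵥ (t • u₀ + (1 - t) • u₁) ⬝ᵥ w = 0 := by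
    have : A *ᵥ u₁ ⬝ᵥ w - A *ᵥ u₀ ⬝ᵥ w ≠ 0 := by linarith
    simp only [mulVec_add, mulVec_smul, add_dotProduct, smul_dotProduct, smul_eq_mul, t]
    field_simp
    ring
  rcases hA ⟨hu, hu0⟩ with h | h
  · exact (hL _ h).ne' hzero
  · exact (hneg _ h).ne hzero

lemma eventually_sub_smul_mem {E : Type*} [NormedAddCommGroup E] [NormedSpace ℝ E]
    {N K : Set E} {v : E} (hN : IsCompact N) (hNK : N ⊆ interior K) (hv : v ∈ interior K) :
    ∀ᶠ ε in 𝓝 (0 : ℝ), ∀ y ∈ N, y - ε • v ∈ K ∧ v - ε • y ∈ K := by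
  obtain ⟨δ, hδ, hthick⟩ := hN.exists_thickening_subset_open isOpen_interior hNK
  obtain ⟨r, hr, hball⟩ := Metric.isOpen_iff.1 isOpen_interior v hv
  obtain ⟨R, hR⟩ := hN.isBounded.exists_norm_le
  have h₁ : ∀ᶠ ε in 𝓝 (0 : ℝ), ε • v ∈ Metric.ball 0 δ :=
    (Continuous.tendsto' (by fun_prop) (0 : ℝ) 0 (zero_smul ℝ v)).eventually
      (Metric.ball_mem_nhds 0 hδ)
  have h₂ : ∀ᶠ ε in 𝓝 (0 : ℝ), |ε| * R < r :=
    (Continuous.tendsto' (by fun_prop) (0 : ℝ) 0 (by simp)).eventually (gt_mem_nhds hr)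
  filter_upwards [h₁, h₂] with ε h₁ h₂ y hy
  refine ⟨interior_subset (hthick (Metric.ball_subset_thickening hy δ ?_)),
    interior_subset (hball ?_)⟩
  · simpa [dist_eq_norm] using h₁
  · rw [Metric.mem_ball, dist_eq_norm, sub_sub_cancel_left, norm_neg, norm_smul,
      Real.norm_eq_abs]
    exact (mul_le_mul_of_nonneg_left (hR y hy) (abs_nonneg ε)).trans_lt h₂

lemma isCompact_image_normalizeBy {S : Set (Matrix ι ι ℝ)} {X : Set (ι → ℝ)} (hS : IsCompact S)
    (hX : IsCompact X) (hne : ∀ A ∈ S, ∀ x ∈ X, A *ᵥ x ⬝ᵥ w ≠ 0) :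
    IsCompact ((fun p : Matrix ι ι ℝ × (ι → ℝ) => normalizeBy w (p.1 *ᵥ p.2)) '' S ×ˢ X) := by
  refine (hS.prod hX).image_of_continuousOn ?_
  have hc : Continuous fun p : Matrix ι ι ℝ × (ι → ℝ) => p.1 *ᵥ p.2 :=
    continuous_fst.matrix_mulVec continuous_snd
  exact ((hc.dotProduct continuous_const).continuousOn.inv₀
    fun p hp => hne _ hp.1 _ hp.2).smul hc.continuousOn

lemma exists_pos_le_norm_sub {K₁ K₂ : Set (ι → ℝ)} (h₁ : IsCompact (slice w K₁))
    (h₂ : IsClosed (slice w K₂)) (h : K₁ ∩ K₂ = {0}) :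
    ∃ r > 0, ∀ a ∈ slice w K₁, ∀ b ∈ slice w K₂, r ≤ ‖a - b‖ := by
  have hdisj : Disjoint (slice w K₁) (slice w K₂) := Set.disjoint_left.2 fun a ha hb => by
    have : a ∈ K₁ ∩ K₂ := ⟨ha.1, hb.1⟩
    rw [h, mem_singleton_iff] at this
    simpa [this] using ha.2
  obtain ⟨r, hr, hth⟩ := hdisj.exists_thickenings h₁ h₂
  refine ⟨r, hr, fun a ha b hb => not_lt.1 fun hab => hth.ne_of_mem
    (Metric.mem_thickening_iff.2 ⟨a, ha, by rwa [dist_comm, dist_eq_norm]⟩)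
    (Metric.self_subset_thickening hr _ hb) rfl⟩

/-- `μ y ≤ x ≤ (1 + δ) μ y` in the order of `K` for some `μ > 0`; the infimum of such `δ`
is `e^{d(x, y)} - 1` for Hilbert's projective metric `d`. -/
def Comparable (K : PointedCone ℝ (ι → ℝ)) (δ : ℝ) (x y : ι → ℝ) : Prop :=
  ∃ μ > 0, x - μ • y ∈ K ∧ ((1 + δ) * μ) • y - x ∈ K

section Comparable

variable {K : PointedCone ℝ (ι → ℝ)} {δ : ℝ} {x y : ι → ℝ}

lemma Comparable.normalizeBy (h : Comparable K δ x y) (hx : 0 < x ⬝ᵥ w) (hy : 0 < y ⬝ᵥ w) :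
    Comparable K δ (normalizeBy w x) (normalizeBy w y) := by
  obtain ⟨μ, hμ, hlow, hup⟩ := h
  refine ⟨μ * (y ⬝ᵥ w) / (x ⬝ᵥ w), by positivity, ?_, ?_⟩
  · convert K.smul_mem (inv_nonneg.2 hx.le) hlow using 1
    ext i; simp [Multicone.normalizeBy]; field_simp
  · convert K.smul_mem (inv_nonneg.2 hx.le) hup using 1
    ext i; simp [Multicone.normalizeBy]; field_simp

lemma Comparable.norm_sub_le (h : Comparable K δ x y) (hy : y ∈ K) (hx1 : x ⬝ᵥ w = 1)
    (hy1 : y ⬝ᵥ w = 1) {c : ℝ} (hc : 0 < c) (hcK : ∀ z ∈ K, c * ‖z‖ ≤ z ⬝ᵥ w) :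
    ‖x - y‖ ≤ 2 * δ / c := by
  obtain ⟨μ, hμ, hlow, hup⟩ := h
  have e₁ := hcK _ hlow
  have e₂ := hcK _ hup
  have e₃ := hcK _ hy
  simp only [sub_dotProduct, smul_dotProduct, hx1, hy1, smul_eq_mul, mul_one] at e₁ e₂ e₃
  have hμ1 : μ ≤ 1 := by nlinarith [norm_nonneg (x - μ • y)]
  have hδ : 1 - μ ≤ δ := by nlinarith [norm_nonneg (((1 + δ) * μ) • y - x)]
  calc ‖x - y‖ = ‖(x - μ • y) - (1 - μ) • y‖ := by congr 1; module
    _ ≤ ‖x - μ • y‖ + (1 - μ) * ‖y‖ := by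
      refine (_root_.norm_sub_le _ _).trans_eq ?_
      rw [norm_smul, Real.norm_of_nonneg (by linarith)]
    _ ≤ 2 * δ / c := by
      rw [le_div_iff₀ hc]; nlinarith [norm_nonneg y]

end Comparable

/-- Birkhoff-type minorization: the images under `B` of the vectors of `K` are uniformly
comparable, in the order of `L`, with the ray through `v`. -/
structure IsMinorizing (w : ι → ℝ) (ε : ℝ) (v : ι → ℝ) (B : Matrix ι ι ℝ)
    (K L : PointedCone ℝ (ι → ℝ)) : Prop where
  mulVec_mem : ∀ u ∈ K, B *ᵥ u ∈ L
  dotProduct_nonneg : ∀ u ∈ K, 0 ≤ B *ᵥ u ⬝ᵥ w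
  sub_smul_mem : ∀ u ∈ K, B *ᵥ u - (ε * (B *ᵥ u ⬝ᵥ w)) • v ∈ L
  smul_sub_mem : ∀ u ∈ K, (B *ᵥ u ⬝ᵥ w) • v - ε • (B *ᵥ u) ∈ L

namespace IsMinorizing

variable {ε : ℝ} {v x y : ι → ℝ} {B : Matrix ι ι ℝ} {K L : PointedCone ℝ (ι → ℝ)}

lemma of_normalizeBy (hB : MapsTo B.mulVec (K \ {0}) (interior L))
    (hL : ∀ z ∈ interior L, 0 < z ⬝ᵥ w)
    (hmin : ∀ u ∈ K, u ≠ 0 → normalizeBy w (B *ᵥ u) - ε • v ∈ L ∧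
      v - ε • normalizeBy w (B *ᵥ u) ∈ L) :
    IsMinorizing w ε v B K L := by
  have key : ∀ u ∈ K, u ≠ 0 → 0 < B *ᵥ u ⬝ᵥ w := fun u hu hu0 => hL _ (hB ⟨hu, hu0⟩)
  refine ⟨fun u hu => ?_, fun u hu => ?_, fun u hu => ?_, fun u hu => ?_⟩ <;>
    rcases eq_or_ne u 0 with rfl | hu0 <;> try simp
  · exact interior_subset (hB ⟨hu, hu0⟩)
  · exact (key u hu hu0).le
  all_goals
    have hBu := (smul_normalizeBy (key u hu hu0).ne').symm
  · convert L.smul_mem (key u hu hu0).le (hmin u hu hu0).1 using 1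
    generalize normalizeBy w (B *ᵥ u) = N, B *ᵥ u ⬝ᵥ w = a at hBu ⊢
    rw [hBu]; module
  · convert L.smul_mem (key u hu hu0).le (hmin u hu hu0).2 using 1
    generalize normalizeBy w (B *ᵥ u) = N, B *ᵥ u ⬝ᵥ w = a at hBu ⊢
    rw [hBu]; module

lemma sup {K₁ K₂ : PointedCone ℝ (ι → ℝ)} (h₁ : IsMinorizing w ε v B K₁ L)
    (h₂ : IsMinorizing w ε v B K₂ L) : IsMinorizing w ε v B (K₁ ⊔ K₂) L := by
  have hsum : ∀ {P : (ι → ℝ) → Prop}, (∀ u ∈ K₁, P u) → (∀ u ∈ K₂, P u) →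
      (∀ a b, P a → P b → P (a + b)) → ∀ u ∈ K₁ ⊔ K₂, P u := by
    intro P h₁ h₂ hadd u hu
    obtain ⟨a, ha, b, hb, rfl⟩ := Submodule.mem_sup.1 hu
    exact hadd a b (h₁ a ha) (h₂ b hb)
  refine ⟨hsum h₁.mulVec_mem h₂.mulVec_mem fun a b ha hb => ?_,
    hsum h₁.dotProduct_nonneg h₂.dotProduct_nonneg fun a b ha hb => ?_,
    hsum h₁.sub_smul_mem h₂.sub_smul_mem fun a b ha hb => ?_,
    hsum h₁.smul_sub_mem h₂.smul_sub_mem fun a b ha hb => ?_⟩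
  · simpa [mulVec_add] using L.add_mem ha hb
  · simpa [mulVec_add, add_dotProduct] using add_nonneg ha hb
  · convert L.add_mem ha hb using 1
    simp only [mulVec_add, add_dotProduct]; module
  · convert L.add_mem ha hb using 1
    simp only [mulVec_add, add_dotProduct]; module

lemma mulVec_sub_smul_mem (h : IsMinorizing w ε v B K L) (hε : 0 ≤ ε) {u : ι → ℝ} (hu : u ∈ K)
    (hy : y ∈ K) (hb : 0 < B *ᵥ y ⬝ᵥ w) :
    B *ᵥ u - (ε ^ 2 * (B *ᵥ u ⬝ᵥ w) / (B *ᵥ y ⬝ᵥ w)) • (B *ᵥ y) ∈ L := by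
  have hc : 0 ≤ ε * (B *ᵥ u ⬝ᵥ w) / (B *ᵥ y ⬝ᵥ w) :=
    div_nonneg (mul_nonneg hε (h.dotProduct_nonneg u hu)) hb.le
  convert L.add_mem (h.sub_smul_mem u hu) (L.smul_mem hc (h.smul_sub_mem y hy)) using 1
  ext i
  simp only [Pi.sub_apply, Pi.add_apply, Pi.smul_apply, smul_eq_mul]
  field_simp
  ring

lemma comparable (h : IsMinorizing w ε v B K L) (hε : 0 < ε) (hx : x ∈ K) (hy : y ∈ K)
    (ha : 0 < B *ᵥ x ⬝ᵥ w) (hb : 0 < B *ᵥ y ⬝ᵥ w) :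
    Comparable L ((ε ^ 4)⁻¹ - 1) (B *ᵥ x) (B *ᵥ y) := by
  refine ⟨ε ^ 2 * (B *ᵥ x ⬝ᵥ w) / (B *ᵥ y ⬝ᵥ w), by positivity,
    h.mulVec_sub_smul_mem hε.le hx hy hb, ?_⟩
  have hc : 0 ≤ (ε ^ 2)⁻¹ * (B *ᵥ x ⬝ᵥ w) / (B *ᵥ y ⬝ᵥ w) := by positivity
  convert L.smul_mem hc (h.mulVec_sub_smul_mem hε.le hy hx ha) using 1
  ext i
  simp only [Pi.sub_apply, Pi.smul_apply, smul_eq_mul]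
  field_simp
  ring

end IsMinorizing

lemma Comparable.mulVec {ε δ : ℝ} {v x y : ι → ℝ} {B : Matrix ι ι ℝ}
    {K L : PointedCone ℝ (ι → ℝ)} (hxy : Comparable K δ x y) (h : IsMinorizing w ε v B K L)
    (hε₀ : 0 ≤ ε) (hε₁ : ε ≤ 1) (hδ : 0 ≤ δ) (hy : y ∈ K) (hb : 0 < B *ᵥ y ⬝ᵥ w) :
    Comparable L ((1 - ε ^ 2) * δ) (B *ᵥ x) (B *ᵥ y) := by
  obtain ⟨μ, hμ, hlow, hup⟩ := hxy
  have hμr : μ * (B *ᵥ y ⬝ᵥ w) ≤ B *ᵥ x ⬝ᵥ w := by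
    have := h.dotProduct_nonneg _ hlow
    simp only [mulVec_sub, mulVec_smul, sub_dotProduct, smul_dotProduct, smul_eq_mul] at this
    linarith
  set r := (B *ᵥ x ⬝ᵥ w) / (B *ᵥ y ⬝ᵥ w)
  have hr : μ ≤ r := by rwa [le_div_iff₀ hb]
  refine ⟨μ + ε ^ 2 * (r - μ), by nlinarith, ?_, ?_⟩
  · convert h.mulVec_sub_smul_mem hε₀ hlow hy hb using 1
    ext i
    simp only [r, Pi.sub_apply, Pi.smul_apply, smul_eq_mul, mulVec_sub, mulVec_smul,
      sub_dotProduct, smul_dotProduct]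
    field_simp
    ring
  · have hc : 0 ≤ (1 - ε ^ 2) * δ * (ε ^ 2 * (r - μ)) :=
      mul_nonneg (mul_nonneg (sub_nonneg.2 (pow_le_one₀ hε₀ hε₁)) hδ)
        (mul_nonneg (sq_nonneg ε) (sub_nonneg.2 hr))
    convert L.add_mem (h.mulVec_sub_smul_mem hε₀ hup hy hb) (L.smul_mem hc (h.mulVec_mem y hy))
      using 1
    ext i
    simp only [r, Pi.sub_apply, Pi.add_apply, Pi.smul_apply, smul_eq_mul, mulVec_sub,
      mulVec_smul, sub_dotProduct, smul_dotProduct]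
    field_simp
    ring

section Powers

variable [DecidableEq ι]

lemma mapsTo_pow {K : Set (ι → ℝ)} {Q : Matrix ι ι ℝ} (hQ : MapsTo Q.mulVec K K) (n : ℕ) :
    MapsTo (Q ^ n).mulVec K K := by
  induction n with
  | zero => intro x hx; simpa using hx
  | succ n ih =>
    intro x hx
    rw [pow_succ', ← mulVec_mulVec]
    exact hQ (ih hx)

lemma mapsTo_pow_of_mapsTo_interior {K : Set (ι → ℝ)} {Q : Matrix ι ι ℝ}
    (hK : ∀ z ∈ interior K, 0 < z ⬝ᵥ w) (hQ : MapsTo Q.mulVec (K \ {0}) (interior K)) (n : ℕ) :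
    MapsTo (Q ^ n).mulVec (K \ {0}) (K \ {0}) := by
  refine mapsTo_pow (fun u hu => ?_) n
  refine ⟨interior_subset (hQ hu), fun h0 => (hK _ (hQ hu)).ne' ?_⟩
  rw [mem_singleton_iff.1 h0, zero_dotProduct]

lemma IsMinorizing.comparable_pow {ε : ℝ} {v x y : ι → ℝ} {Q : Matrix ι ι ℝ}
    {K : PointedCone ℝ (ι → ℝ)} (h : IsMinorizing w ε v Q K K) (hε₀ : 0 < ε) (hε₁ : ε ≤ 1)
    (hx : x ∈ K) (hy : y ∈ K) (hxpos : 0 < Q *ᵥ x ⬝ᵥ w)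
    (hypos : ∀ n, 0 < Q ^ (n + 1) *ᵥ y ⬝ᵥ w) (n : ℕ) :
    Comparable K (((ε ^ 4)⁻¹ - 1) * (1 - ε ^ 2) ^ n) (Q ^ (n + 1) *ᵥ x) (Q ^ (n + 1) *ᵥ y) := by
  have hδ₀ : 0 ≤ (ε ^ 4)⁻¹ - 1 :=
    sub_nonneg.2 ((one_le_inv₀ (by positivity)).2 (pow_le_one₀ hε₀.le hε₁))
  have hε₂ : 0 ≤ 1 - ε ^ 2 := sub_nonneg.2 (pow_le_one₀ hε₀.le hε₁)
  induction n with
  | zero => simpa using h.comparable hε₀ hx hy hxpos (by simpa using hypos 0)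
  | succ n ih =>
    have hpow : ∀ z : ι → ℝ, Q *ᵥ (Q ^ (n + 1) *ᵥ z) = Q ^ (n + 1 + 1) *ᵥ z := fun z => by
      rw [mulVec_mulVec, ← pow_succ']
    have := ih.mulVec h hε₀.le hε₁ (by positivity)
      (mapsTo_pow (fun u hu => h.mulVec_mem u hu) _ hy) (by rw [hpow]; exact hypos (n + 1))
    rw [hpow, hpow] at this
    convert this using 1
    ring

end Powers

section TwoCones

variable {Kp Kq : PointedCone ℝ (ι → ℝ)} {Q : Matrix ι ι ℝ} {c : ℝ}

lemma mul_norm_le_dotProduct_sup (hcp : ∀ z ∈ Kp, c * ‖z‖ ≤ z ⬝ᵥ w)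
    (hcq : ∀ z ∈ Kq, c * ‖z‖ ≤ z ⬝ᵥ w) (hc : 0 ≤ c) : ∀ z ∈ Kp ⊔ Kq, c * ‖z‖ ≤ z ⬝ᵥ w := by
  intro z hz
  obtain ⟨a, ha, b, hb, rfl⟩ := Submodule.mem_sup.1 hz
  calc c * ‖a + b‖ ≤ c * ‖a‖ + c * ‖b‖ := by rw [← mul_add]; gcongr; exact norm_add_le a b
    _ ≤ (a + b) ⬝ᵥ w := by rw [add_dotProduct]; exact add_le_add (hcp a ha) (hcq b hb)

lemma isCompact_image_slice_subset_interior {K : PointedCone ℝ (ι → ℝ)}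
    (hK : IsClosed (K : Set (ι → ℝ))) (hc : 0 < c) (hcK : ∀ z ∈ K, c * ‖z‖ ≤ z ⬝ᵥ w)
    (hw : 0 < w ⬝ᵥ w) (hQ : MapsTo Q.mulVec (K \ {0}) (interior K)) :
    IsCompact ((fun u => normalizeBy w (Q *ᵥ u)) '' slice w K) ∧
      (fun u => normalizeBy w (Q *ᵥ u)) '' slice w K ⊆ interior K := by
  have hint : ∀ z ∈ interior (K : Set (ι → ℝ)), 0 < z ⬝ᵥ w := fun _ =>
    dotProduct_pos_of_mem_interior_of_mul_norm_le hc.le hcK hw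
  have hQu : ∀ u ∈ slice w K, Q *ᵥ u ∈ interior K := fun u ⟨hu, hu1⟩ =>
    hQ ⟨hu, by rintro rfl; simp at hu1⟩
  have hcont : Continuous fun u : ι → ℝ => Q *ᵥ u := continuous_const.matrix_mulVec continuous_id
  refine ⟨(isCompact_slice hK hc hcK).image_of_continuousOn ?_, ?_⟩
  · exact ((hcont.dotProduct continuous_const).continuousOn.inv₀
      fun u hu => (hint _ (hQu u hu)).ne').smul hcont.continuousOn
  · rintro _ ⟨u, hu, rfl⟩
    exact normalizeBy_mem_interior (hQu u hu) (hint _ (hQu u hu))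

lemma exists_isMinorizing_sup (hp : IsClosed (Kp : Set (ι → ℝ)))
    (hq : IsClosed (Kq : Set (ι → ℝ))) (hc : 0 < c) (hcp : ∀ z ∈ Kp, c * ‖z‖ ≤ z ⬝ᵥ w)
    (hcq : ∀ z ∈ Kq, c * ‖z‖ ≤ z ⬝ᵥ w) (hw : 0 < w ⬝ᵥ w)
    (hQp : MapsTo Q.mulVec (Kp \ {0}) (interior Kp))
    (hQq : MapsTo Q.mulVec (Kq \ {0}) (interior Kq)) {x : ι → ℝ} (hx : x ∈ Kp) (hx0 : x ≠ 0) :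
    ∃ ε v, 0 < ε ∧ ε ≤ 1 ∧ IsMinorizing w ε v Q (Kp ⊔ Kq) (Kp ⊔ Kq) := by
  set K' := Kp ⊔ Kq
  set f := fun u => normalizeBy w (Q *ᵥ u)
  have hpK' : interior (Kp : Set (ι → ℝ)) ⊆ interior K' :=
    interior_mono (SetLike.coe_subset_coe.2 le_sup_left)
  have hqK' : interior (Kq : Set (ι → ℝ)) ⊆ interior K' :=
    interior_mono (SetLike.coe_subset_coe.2 le_sup_right)
  obtain ⟨hNp, hNpK⟩ := isCompact_image_slice_subset_interior hp hc hcp hw hQp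
  obtain ⟨hNq, hNqK⟩ := isCompact_image_slice_subset_interior hq hc hcq hw hQq
  have hslice : ∀ {K : PointedCone ℝ (ι → ℝ)}, (∀ z ∈ K, c * ‖z‖ ≤ z ⬝ᵥ w) →
      ∀ u ∈ K, u ≠ 0 → f u ∈ f '' slice w K := fun hcK u hu hu0 => by
    have hu' := dotProduct_pos_of_mul_norm_le hc hcK hu hu0
    exact ⟨normalizeBy w u, ⟨normalizeBy_mem hu hu'.le, normalizeBy_dotProduct hu'.ne'⟩,
      normalizeBy_mulVec_normalizeBy Q hu'.ne'⟩
  have hN := eventually_sub_smul_mem (hNp.union hNq)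
    (union_subset (hNpK.trans hpK') (hNqK.trans hqK')) (hpK' (hNpK (hslice hcp x hx hx0)))
  obtain ⟨ε, hε, hε₀, hε₁⟩ :=
    ((hN.filter_mono nhdsWithin_le_nhds).and (Ioc_mem_nhdsGT one_pos)).exists
  have hint : ∀ z ∈ interior (K' : Set (ι → ℝ)), 0 < z ⬝ᵥ w := fun _ =>
    dotProduct_pos_of_mem_interior_of_mul_norm_le hc.le
      (mul_norm_le_dotProduct_sup hcp hcq hc.le) hw
  exact ⟨ε, _, hε₀, hε₁,
    (IsMinorizing.of_normalizeBy (fun u hu => hpK' (hQp hu)) hint fun u hu hu0 =>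
      hε _ (.inl (hslice hcp u hu hu0))).sup
    (IsMinorizing.of_normalizeBy (fun u hu => hqK' (hQq hu)) hint fun u hu hu0 =>
      hε _ (.inr (hslice hcq u hu hu0)))⟩

/-- `Q` contracts the cone `Kp ⊔ Kq`, so it pulls the directions of `Q ^ n x ∈ Kp` and
`Q ^ n y ∈ Kq` together; but their normalizations stay in the disjoint compact slices. -/
theorem false_of_mapsTo_interior [DecidableEq ι] (hp : IsClosed (Kp : Set (ι → ℝ)))
    (hq : IsClosed (Kq : Set (ι → ℝ))) (hc : 0 < c) (hcp : ∀ z ∈ Kp, c * ‖z‖ ≤ z ⬝ᵥ w)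
    (hcq : ∀ z ∈ Kq, c * ‖z‖ ≤ z ⬝ᵥ w) (hw : 0 < w ⬝ᵥ w)
    (hpq : (Kp : Set (ι → ℝ)) ∩ Kq = {0})
    (hQp : MapsTo Q.mulVec (Kp \ {0}) (interior Kp))
    (hQq : MapsTo Q.mulVec (Kq \ {0}) (interior Kq)) {x y : ι → ℝ}
    (hx : x ∈ Kp) (hx0 : x ≠ 0) (hy : y ∈ Kq) (hy0 : y ≠ 0) : False := by
  obtain ⟨ε, v, hε₀, hε₁, hmin⟩ := exists_isMinorizing_sup hp hq hc hcp hcq hw hQp hQq hx hx0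
  have horbit : ∀ {K : PointedCone ℝ (ι → ℝ)}, (∀ z ∈ K, c * ‖z‖ ≤ z ⬝ᵥ w) →
      MapsTo Q.mulVec (K \ {0}) (interior K) → ∀ z ∈ K, z ≠ 0 →
      ∀ n, Q ^ n *ᵥ z ∈ K ∧ 0 < Q ^ n *ᵥ z ⬝ᵥ w := fun hcK hQ z hz hz0 n => by
    obtain ⟨hzn, hzn0⟩ := mapsTo_pow_of_mapsTo_interior
      (fun _ => dotProduct_pos_of_mem_interior_of_mul_norm_le hc.le hcK hw) hQ n ⟨hz, hz0⟩
    exact ⟨hzn, dotProduct_pos_of_mul_norm_le hc hcK hzn hzn0⟩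
  obtain ⟨r, hr, hsep⟩ := exists_pos_le_norm_sub (isCompact_slice hp hc hcp)
    (isCompact_slice hq hc hcq).isClosed hpq
  have hlim : Tendsto (fun n : ℕ => 2 * (((ε ^ 4)⁻¹ - 1) * (1 - ε ^ 2) ^ n) / c) atTop (𝓝 0) := by
    simpa using ((tendsto_pow_atTop_nhds_zero_of_lt_one (sub_nonneg.2 (pow_le_one₀ hε₀.le hε₁))
      (by linarith [pow_pos hε₀ 2])).const_mul ((ε ^ 4)⁻¹ - 1)).const_mul 2 |>.div_const c
  obtain ⟨n, hn⟩ := (hlim.eventually (gt_mem_nhds hr)).exists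
  obtain ⟨hxn, hxn'⟩ := horbit hcp hQp x hx hx0 (n + 1)
  obtain ⟨hyn, hyn'⟩ := horbit hcq hQq y hy hy0 (n + 1)
  have hcomp := (hmin.comparable_pow hε₀ hε₁ (Submodule.mem_sup_left hx)
    (Submodule.mem_sup_right hy)
    (dotProduct_pos_of_mem_interior_of_mul_norm_le hc.le hcp hw (hQp ⟨hx, hx0⟩))
    (fun k => (horbit hcq hQq y hy hy0 (k + 1)).2) n).normalizeBy hxn' hyn'
  have hdist := hcomp.norm_sub_le (Submodule.mem_sup_right (normalizeBy_mem hyn hyn'.le))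
    (normalizeBy_dotProduct hxn'.ne') (normalizeBy_dotProduct hyn'.ne') hc
    (mul_norm_le_dotProduct_sup hcp hcq hc.le)
  exact (hsep _ ⟨normalizeBy_mem hxn hxn'.le, normalizeBy_dotProduct hxn'.ne'⟩
    _ ⟨normalizeBy_mem hyn hyn'.le, normalizeBy_dotProduct hyn'.ne'⟩).not_gt (hdist.trans_lt hn)

end TwoCones

section Complexification

open Complex

lemma enorm_le_sqrt_card_mul {E : Type*} [SeminormedAddGroup E] {u : ι → E} {M : ℝ}
    (hM0 : 0 ≤ M) (hM : ∀ i, ‖u i‖ ≤ M) : _root_.enorm u ≤ √(Fintype.card ι) * M := by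
  unfold _root_.enorm
  calc √(∑ i, ‖u i‖ ^ 2) ≤ √(∑ _i : ι, M ^ 2) :=
        Real.sqrt_le_sqrt (Finset.sum_le_sum fun i _ => pow_le_pow_left₀ (norm_nonneg _) (hM i) 2)
    _ = √(Fintype.card ι) * M := by
        rw [Finset.sum_const, Finset.card_univ, nsmul_eq_mul, Real.sqrt_mul (Nat.cast_nonneg _),
          Real.sqrt_sq hM0]

lemma norm_one_sub_I_mul_le (α β : ℝ) : ‖(1 - I) * β‖ ≤ ‖(1 + I) * α + (1 - I) * β‖ := by
  rw [← sq_le_sq₀ (norm_nonneg _) (norm_nonneg _), Complex.sq_norm, Complex.sq_norm,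
    Complex.normSq_apply, Complex.normSq_apply]
  simp
  nlinarith [sq_nonneg α]

lemma mulVecC_apply (B : Matrix ι ι ℝ) (c : ℂ) (u v : ι → ℝ) (i : ι) :
    mulVecC B (fun k => c * (((u k : ℂ) + (v k : ℂ)) + I * ((u k : ℂ) - (v k : ℂ)))) i =
      c * ((1 + I) * ((B *ᵥ u) i : ℂ) + (1 - I) * ((B *ᵥ v) i : ℂ)) := by
  simp only [mulVecC, mulVec, dotProduct, Matrix.map_apply]
  push_cast
  rw [Finset.mul_sum, Finset.mul_sum, ← Finset.sum_add_distrib, Finset.mul_sum]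
  exact Finset.sum_congr rfl fun k _ => by ring

lemma sum_mulVecC_mul (B : Matrix ι ι ℝ) (c : ℂ) (u v : ι → ℝ) :
    ∑ i, mulVecC B (fun k => c * (((u k : ℂ) + (v k : ℂ)) + I * ((u k : ℂ) - (v k : ℂ)))) i *
      (w i : ℂ) = c * ((1 + I) * (B *ᵥ u ⬝ᵥ w : ℝ) + (1 - I) * (B *ᵥ v ⬝ᵥ w : ℝ)) := by
  simp only [mulVecC_apply, dotProduct]
  push_cast
  rw [Finset.mul_sum, Finset.mul_sum, ← Finset.sum_add_distrib, Finset.mul_sum]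
  exact Finset.sum_congr rfl fun k _ => by ring

/-- When `a = 0` any nonzero `a'` will do, since then `B *ᵥ a ⬝ᵥ w = 0`. -/
lemma exists_mulVec_eq_smul_normalizeBy {K : Set (ι → ℝ)} {B : Matrix ι ι ℝ}
    (hB : ∀ u ∈ K, u ≠ 0 → B *ᵥ u ⬝ᵥ w ≠ 0) {a b : ι → ℝ} (ha : a ∈ K) (hb : b ∈ K)
    (hab : a = 0 → b ≠ 0) :
    ∃ a' ∈ K, a' ≠ 0 ∧ B *ᵥ a = (B *ᵥ a ⬝ᵥ w) • normalizeBy w (B *ᵥ a') := by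
  by_cases ha0 : a = 0
  · exact ⟨b, hb, hab ha0, by simp [ha0]⟩
  · exact ⟨a, ha, ha0, (smul_normalizeBy (hB a ha ha0)).symm⟩

lemma exists_normalizeBy_mulVecC {K : Set (ι → ℝ)} {B : Matrix ι ι ℝ}
    (hB : ∀ u ∈ K, u ≠ 0 → B *ᵥ u ⬝ᵥ w ≠ 0) {z : ι → ℂ} (hz : z ∈ complexify K) (hz0 : z ≠ 0) :
    (∑ i, mulVecC B z i * (w i : ℂ)) ≠ 0 ∧ ∃ u ∈ K, u ≠ 0 ∧ ∃ v ∈ K, v ≠ 0 ∧ ∃ τ : ℂ, ‖τ‖ ≤ 1 ∧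
      (∑ i, mulVecC B z i * (w i : ℂ))⁻¹ • mulVecC B z = fun i =>
        (normalizeBy w (B *ᵥ u) i : ℂ) +
          τ * (normalizeBy w (B *ᵥ v) i - normalizeBy w (B *ᵥ u) i) := by
  obtain ⟨c, u, v, hu, hv, rfl⟩ := hz
  have hc : c ≠ 0 := by rintro rfl; exact hz0 (by funext i; simp)
  have huv : u ≠ 0 ∨ v ≠ 0 := by
    by_contra! h
    exact hz0 (by funext i; simp [h.1, h.2])
  obtain ⟨u', hu', hu'0, hBu⟩ :=
    exists_mulVec_eq_smul_normalizeBy hB hu hv fun h => huv.resolve_left (not_not.2 h)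
  obtain ⟨v', hv', hv'0, hBv⟩ :=
    exists_mulVec_eq_smul_normalizeBy hB hv hu fun h => huv.resolve_right (not_not.2 h)
  have hsum := sum_mulVecC_mul (w := w) B c u v
  set α := B *ᵥ u ⬝ᵥ w
  set β := B *ᵥ v ⬝ᵥ w
  set D : ℂ := (1 + I) * α + (1 - I) * β
  have hD : D ≠ 0 := by
    intro h
    have hre := congrArg Complex.re h
    have him := congrArg Complex.im h
    simp [D] at hre him
    rcases huv with h | h
    · exact hB u hu h (by linarith)
    · exact hB v hv h (by linarith)
  refine ⟨hsum ▸ mul_ne_zero hc hD, u', hu', hu'0, v', hv', hv'0, (1 - I) * β / D, ?_, ?_⟩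
  · rw [norm_div, div_le_one (norm_pos_iff.2 hD)]
    exact norm_one_sub_I_mul_le α β
  · funext i
    have hui := congrFun hBu i
    have hvi := congrFun hBv i
    simp only [Pi.smul_apply, smul_eq_mul] at hui hvi ⊢
    rw [hsum, mulVecC_apply, hui, hvi]
    push_cast
    field_simp
    ring

lemma enorm_normalizeBy_mulVecC_sub_le {K₁ K₂ : Set (ι → ℝ)} {B : Matrix ι ι ℝ}
    (hB₁ : ∀ u ∈ K₁, u ≠ 0 → B *ᵥ u ⬝ᵥ w ≠ 0) (hB₂ : ∀ u ∈ K₂, u ≠ 0 → B *ᵥ u ⬝ᵥ w ≠ 0)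
    {δ : ℝ} (hδ : ∀ x ∈ K₁ ∪ K₂, x ≠ 0 → ∀ y ∈ K₁ ∪ K₂, y ≠ 0 →
      ‖normalizeBy w (B *ᵥ x) - normalizeBy w (B *ᵥ y)‖ ≤ δ)
    {z₁ z₂ : ι → ℂ} (hz₁ : z₁ ∈ complexify K₁) (hz₂ : z₂ ∈ complexify K₂) (hz₁0 : z₁ ≠ 0)
    (hz₂0 : z₂ ≠ 0) :
    (∑ i, mulVecC B z₁ i * (w i : ℂ)) ≠ 0 ∧ (∑ i, mulVecC B z₂ i * (w i : ℂ)) ≠ 0 ∧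
      _root_.enorm ((∑ i, mulVecC B z₁ i * (w i : ℂ))⁻¹ • mulVecC B z₁ -
        (∑ i, mulVecC B z₂ i * (w i : ℂ))⁻¹ • mulVecC B z₂) ≤ √(Fintype.card ι) * (3 * δ) := by
  obtain ⟨hne₁, u₁, hu₁, hu₁0, v₁, hv₁, hv₁0, τ₁, hτ₁, h₁⟩ :=
    exists_normalizeBy_mulVecC hB₁ hz₁ hz₁0
  obtain ⟨hne₂, u₂, hu₂, hu₂0, v₂, hv₂, hv₂0, τ₂, hτ₂, h₂⟩ :=
    exists_normalizeBy_mulVecC hB₂ hz₂ hz₂0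
  have hdist : ∀ x ∈ K₁ ∪ K₂, x ≠ 0 → ∀ y ∈ K₁ ∪ K₂, y ≠ 0 → ∀ i,
      ‖((normalizeBy w (B *ᵥ x) i - normalizeBy w (B *ᵥ y) i : ℝ) : ℂ)‖ ≤ δ :=
    fun x hx hx0 y hy hy0 i => by
      rw [Complex.norm_real]
      exact (norm_le_pi_norm (normalizeBy w (B *ᵥ x) - normalizeBy w (B *ᵥ y)) i).trans
        (hδ x hx hx0 y hy hy0)
  have hδ0 : 0 ≤ δ := (norm_nonneg _).trans (hδ u₁ (.inl hu₁) hu₁0 u₁ (.inl hu₁) hu₁0)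
  refine ⟨hne₁, hne₂, ?_⟩
  rw [h₁, h₂]
  refine enorm_le_sqrt_card_mul (by positivity) fun i => ?_
  calc _ = ‖((normalizeBy w (B *ᵥ u₁) i - normalizeBy w (B *ᵥ u₂) i : ℝ) : ℂ) +
        τ₁ * ((normalizeBy w (B *ᵥ v₁) i - normalizeBy w (B *ᵥ u₁) i : ℝ) : ℂ) -
        τ₂ * ((normalizeBy w (B *ᵥ v₂) i - normalizeBy w (B *ᵥ u₂) i : ℝ) : ℂ)‖ := by
        congr 1; simp only [Pi.sub_apply]; push_cast; ring
    _ ≤ δ + 1 * δ + 1 * δ := by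
        refine (norm_sub_le _ _).trans (add_le_add ((norm_add_le _ _).trans (add_le_add ?_ ?_)) ?_)
        · exact hdist _ (.inl hu₁) hu₁0 _ (.inr hu₂) hu₂0 i
        · rw [norm_mul]
          exact mul_le_mul hτ₁ (hdist _ (.inl hv₁) hv₁0 _ (.inl hu₁) hu₁0 i) (norm_nonneg _)
            zero_le_one
        · rw [norm_mul]
          exact mul_le_mul hτ₂ (hdist _ (.inr hv₂) hv₂0 _ (.inr hu₂) hu₂0 i) (norm_nonneg _)
            zero_le_one
    _ = 3 * δ := by ring

end Complexification

end Multicone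

theorem Function.End.list_prod_map_apply_eq {α β : Type*} [Fintype α] (f : β → Function.End α)
    (l : List β) (hl : Fintype.card α ^ 2 ≤ l.length)
    (h : ∀ l', l' <:+: l → l' ≠ [] → ∀ p q,
      (l'.map f).prod p = p → (l'.map f).prod q = q → p = q) (a b : α) :
    (l.map f).prod a = (l.map f).prod b := by
  set F : ℕ → Function.End α := fun k => ((l.drop k).map f).prod
  -- pigeonhole on the pairs `(F k a, F k b)`, `k ≤ card α ^ 2`: a repeated pair gives an infix
  -- with two fixed points
  have key : ∀ i k, i < k → k ≤ l.length → F i a = F k a → F i b = F k b →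
      (l.map f).prod a = (l.map f).prod b := by
    intro i k hik hk ha hb
    set I := (l.drop i).take (k - i)
    have hdrop : l.drop i = I ++ l.drop k := by
      rw [← List.take_append_drop (k - i) (l.drop i), List.drop_drop, Nat.add_sub_cancel' hik.le]
    have hF : F i = (I.map f).prod * F k := by
      simp only [F, hdrop, List.map_append, List.prod_append]
    have hI : I <:+: l := ⟨l.take i, l.drop k, by rw [List.append_assoc, ← hdrop,
      List.take_append_drop]⟩
    have hIne : I ≠ [] := by
      rw [← List.length_pos_iff]; simp only [I, List.length_take, List.length_drop]; omega
    have hfix := h I hI hIne (F k a) (F k b) (by rw [hF] at ha; exact ha)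
      (by rw [hF] at hb; exact hb)
    have hsplit : (l.map f).prod = ((l.take k).map f).prod * F k := by
      rw [← List.prod_append, ← List.map_append, List.take_append_drop]
    rw [hsplit]
    exact congrArg ((l.take k).map f).prod hfix
  obtain ⟨i, k, hne, hik⟩ := Fintype.exists_ne_map_eq_of_card_lt
    (fun k : Fin (Fintype.card α ^ 2 + 1) => (F k a, F k b)) (by simp [Fintype.card_prod, sq])
  rcases lt_or_gt_of_ne (Fin.val_ne_of_ne hne) with hlt | hlt
  · exact key i k hlt (by omega) (congrArg Prod.fst hik) (congrArg Prod.snd hik)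
  · exact key k i hlt (by omega) (congrArg Prod.fst hik).symm (congrArg Prod.snd hik).symm

namespace IsMulticone

open Multicone

variable {ι : Type*} [Fintype ι] {S : Set (Matrix ι ι ℝ)} {m : ℕ} {K : Fin m → Set (ι → ℝ)}
  {w : ι → ℝ}

lemma isClosed (hK : IsMulticone S K w) (j : Fin m) : IsClosed (K j) := hK.1 j

lemma convex (hK : IsMulticone S K w) (j : Fin m) : Convex ℝ (K j) := hK.2.1 j

lemma interior_nonempty (hK : IsMulticone S K w) (j : Fin m) : (interior (K j)).Nonempty :=
  hK.2.2.1 j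

lemma smul_mem (hK : IsMulticone S K w) {j : Fin m} {c : ℝ} (hc : 0 ≤ c) {x : ι → ℝ}
    (hx : x ∈ K j) : c • x ∈ K j :=
  hK.2.2.2.1 j c hc x hx

lemma dotProduct_pos (hK : IsMulticone S K w) {j : Fin m} {u : ι → ℝ} (hu : u ∈ K j)
    (hu0 : u ≠ 0) : 0 < u ⬝ᵥ w :=
  hK.2.2.2.2.2.1 u (mem_iUnion.2 ⟨j, hu⟩) hu0

lemma inter_eq (hK : IsMulticone S K w) {j₁ j₂ : Fin m} (h : j₁ ≠ j₂) : K j₁ ∩ K j₂ = {0} :=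
  hK.2.2.2.2.2.2.2 j₁ j₂ h

def cone (hK : IsMulticone S K w) (j : Fin m) : PointedCone ℝ (ι → ℝ) where
  carrier := K j
  add_mem' {x y} hx hy := by
    convert hK.smul_mem zero_le_two (hK.convex j hx hy (by norm_num : (0 : ℝ) ≤ 1 / 2)
      (by norm_num : (0 : ℝ) ≤ 1 / 2) (by norm_num)) using 1
    module
  zero_mem' := by
    obtain ⟨x, hx⟩ := hK.interior_nonempty j
    simpa using hK.smul_mem le_rfl (interior_subset hx)
  smul_mem' c _ hx := hK.smul_mem c.2 hx

@[simp]
lemma mem_cone (hK : IsMulticone S K w) {j : Fin m} {x : ι → ℝ} : x ∈ hK.cone j ↔ x ∈ K j :=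
  Iff.rfl

lemma dotProduct_self_pos (hK : IsMulticone S K w) : 0 < w ⬝ᵥ w := by
  obtain ⟨-, -, -, -, hw, -⟩ := hK
  simp [dotProduct, ← sq, hw]

lemma dotProduct_pos_of_mem_interior (hK : IsMulticone S K w) {j : Fin m} {z : ι → ℝ}
    (hz : z ∈ interior (K j)) : 0 < z ⬝ᵥ w := by
  refine Multicone.dotProduct_pos_of_mem_interior (fun u hu => ?_) ?_ hz
  · rcases eq_or_ne u 0 with rfl | hu0
    · simp
    · exact (hK.dotProduct_pos hu hu0).le
  · exact hK.dotProduct_self_pos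

lemma ne_zero_of_mem_interior (hK : IsMulticone S K w) {j : Fin m} {z : ι → ℝ}
    (hz : z ∈ interior (K j)) : z ≠ 0 := by
  rintro rfl
  simpa using hK.dotProduct_pos_of_mem_interior hz

lemma exists_mem_ne_zero (hK : IsMulticone S K w) (j : Fin m) : ∃ x ∈ K j, x ≠ 0 := by
  obtain ⟨x, hx⟩ := hK.interior_nonempty j
  exact ⟨x, interior_subset hx, hK.ne_zero_of_mem_interior hx⟩

lemma exists_mul_norm_le (hK : IsMulticone S K w) :
    ∃ c > 0, ∀ j, ∀ x ∈ K j, c * ‖x‖ ≤ x ⬝ᵥ w := by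
  obtain ⟨c, hc, hcU⟩ := exists_mul_norm_le_dotProduct (isClosed_iUnion_of_finite hK.isClosed)
    (fun x hx c hc => by
      obtain ⟨j, hj⟩ := mem_iUnion.1 hx
      exact mem_iUnion.2 ⟨j, hK.smul_mem hc hj⟩) fun x hx hx0 => by
      obtain ⟨j, hj⟩ := mem_iUnion.1 hx
      exact hK.dotProduct_pos hj hx0
  exact ⟨c, hc, fun j x hx => hcU x (mem_iUnion.2 ⟨j, hx⟩)⟩

lemma exists_target (hK : IsMulticone S K w) : ∃ tgt : Matrix ι ι ℝ → Function.End (Fin m),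
    ∀ A ∈ S, ∀ j, MapsIntoInteriorUpToSign A (K j) (K (tgt A j)) := by
  obtain ⟨-, -, -, -, -, -, hmaps, -⟩ := hK
  have h : ∀ A ∈ S, ∀ j, ∃ ℓ, MapsIntoInteriorUpToSign A (K j) (K ℓ) := fun A hA j => by
    obtain ⟨ℓ, hℓ⟩ := hmaps A hA j
    exact ⟨ℓ, fun u hu => by simpa [Set.mem_neg, neg_mulVec] using hℓ u hu.1 hu.2⟩
  choose! tgt htgt using h
  exact ⟨tgt, htgt⟩

section MapsInto

variable {j ℓ : Fin m} {A : Matrix ι ι ℝ}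

lemma dotProduct_mulVec_ne_zero (hK : IsMulticone S K w)
    (hA : MapsIntoInteriorUpToSign A (K j) (K ℓ)) {u : ι → ℝ} (hu : u ∈ K j) (hu0 : u ≠ 0) :
    A *ᵥ u ⬝ᵥ w ≠ 0 := by
  rcases hA ⟨hu, hu0⟩ with h | h
  · exact (hK.dotProduct_pos_of_mem_interior h).ne'
  · simpa using (hK.dotProduct_pos_of_mem_interior (Set.mem_neg.1 h)).ne'

lemma normalizeBy_mem_interior (hK : IsMulticone S K w)
    (hA : MapsIntoInteriorUpToSign A (K j) (K ℓ)) {u : ι → ℝ} (hu : u ∈ K j) (hu0 : u ≠ 0) :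
    normalizeBy w (A *ᵥ u) ∈ interior (K ℓ) := by
  rcases hA ⟨hu, hu0⟩ with h | h
  · exact Multicone.normalizeBy_mem_interior (K := hK.cone ℓ) h
      (hK.dotProduct_pos_of_mem_interior h)
  · rw [← normalizeBy_neg]
    exact Multicone.normalizeBy_mem_interior (K := hK.cone ℓ) (Set.mem_neg.1 h)
      (hK.dotProduct_pos_of_mem_interior (Set.mem_neg.1 h))

lemma mapsIntoInteriorUpToSign_mul (hK : IsMulticone S K w) {k : Fin m} {B : Matrix ι ι ℝ}
    (hA : MapsIntoInteriorUpToSign A (K j) (K ℓ)) (hB : MapsIntoInteriorUpToSign B (K ℓ) (K k)) :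
    MapsIntoInteriorUpToSign (B * A) (K j) (K k) := by
  intro u hu
  rw [← mulVec_mulVec]
  rcases hA hu with h | h
  · exact hB ⟨interior_subset h, hK.ne_zero_of_mem_interior h⟩
  · have := hB ⟨interior_subset (Set.mem_neg.1 h), hK.ne_zero_of_mem_interior (Set.mem_neg.1 h)⟩
    rw [mulVec_neg] at this
    simpa [Set.mem_neg, or_comm] using this

lemma mapsTo_or_mapsTo_neg (hK : IsMulticone S K w)
    (hA : MapsIntoInteriorUpToSign A (K j) (K ℓ)) :
    MapsTo A.mulVec (K j \ {0}) (interior (K ℓ)) ∨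
      MapsTo (-A).mulVec (K j \ {0}) (interior (K ℓ)) :=
  Multicone.mapsTo_or_mapsTo_neg (hK.convex j) (fun _ hu hu0 => hK.dotProduct_pos hu hu0)
    (fun _ hz => hK.dotProduct_pos_of_mem_interior hz) hA

end MapsInto

lemma exists_isMinorizing (hK : IsMulticone S K w) {j ℓ : Fin m} {A : Matrix ι ι ℝ} {ε : ℝ}
    {v : ι → ℝ} (hA : MapsIntoInteriorUpToSign A (K j) (K ℓ))
    (hmin : ∀ u ∈ K j, u ≠ 0 → normalizeBy w (A *ᵥ u) - ε • v ∈ K ℓ ∧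
      v - ε • normalizeBy w (A *ᵥ u) ∈ K ℓ) :
    ∃ B : Matrix ι ι ℝ, (∀ u, normalizeBy w (B *ᵥ u) = normalizeBy w (A *ᵥ u)) ∧
      (∀ u ∈ K j, u ≠ 0 → 0 < B *ᵥ u ⬝ᵥ w) ∧ IsMinorizing w ε v B (hK.cone j) (hK.cone ℓ) := by
  have hL : ∀ z ∈ interior (K ℓ), 0 < z ⬝ᵥ w := fun _ hz => hK.dotProduct_pos_of_mem_interior hz
  obtain ⟨B, hBA, hB⟩ : ∃ B : Matrix ι ι ℝ, (∀ u, normalizeBy w (B *ᵥ u) =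
      normalizeBy w (A *ᵥ u)) ∧ MapsTo B.mulVec (K j \ {0}) (interior (K ℓ)) := by
    rcases hK.mapsTo_or_mapsTo_neg hA with h | h
    · exact ⟨A, fun _ => rfl, h⟩
    · exact ⟨-A, fun u => by rw [neg_mulVec, normalizeBy_neg], h⟩
  refine ⟨B, hBA, fun u hu hu0 => hL _ (hB ⟨hu, hu0⟩), .of_normalizeBy hB hL ?_⟩
  simpa only [hBA, mem_cone] using hmin

lemma exists_minorization (hK : IsMulticone S K w) (hS : IsCompact S)
    {tgt : Matrix ι ι ℝ → Function.End (Fin m)}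
    (htgt : ∀ A ∈ S, ∀ j, MapsIntoInteriorUpToSign A (K j) (K (tgt A j))) :
    ∃ ε ∈ Ioo (0 : ℝ) 1, ∃ v : Fin m → ι → ℝ, ∀ A ∈ S, ∀ j, ∀ u ∈ K j, u ≠ 0 →
      normalizeBy w (A *ᵥ u) - ε • v (tgt A j) ∈ K (tgt A j) ∧
        v (tgt A j) - ε • normalizeBy w (A *ᵥ u) ∈ K (tgt A j) := by
  choose v hv using hK.interior_nonempty
  obtain ⟨c, hc, hcK⟩ := hK.exists_mul_norm_le
  have hslice : ∀ {j x}, x ∈ slice w (K j) → x ∈ K j ∧ x ≠ 0 := fun ⟨hx, hx1⟩ =>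
    ⟨hx, by rintro rfl; simp at hx1⟩
  set N := ⋃ j, (fun p : Matrix ι ι ℝ × (ι → ℝ) => normalizeBy w (p.1 *ᵥ p.2)) ''
    S ×ˢ slice w (K j)
  have hN : IsCompact N := isCompact_iUnion fun j => isCompact_image_normalizeBy hS
    (isCompact_slice (hK.isClosed j) hc (hcK j)) fun A hA _ hx =>
      hK.dotProduct_mulVec_ne_zero (htgt A hA j) (hslice hx).1 (hslice hx).2
  -- a point of `N` lying in `K ℓ` lies in its interior, since distinct cones meet only at `0`
  have hNK : ∀ ℓ, N ∩ K ℓ ⊆ interior (K ℓ) := by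
    rintro ℓ _ ⟨hy, hℓ⟩
    obtain ⟨j, ⟨A, x⟩, ⟨hA, hx⟩, rfl⟩ := mem_iUnion.1 hy
    have hint := hK.normalizeBy_mem_interior (htgt A hA j) (hslice hx).1 (hslice hx).2
    obtain rfl : tgt A j = ℓ := by
      by_contra hne
      have hmem : normalizeBy w (A *ᵥ x) ∈ K (tgt A j) ∩ K ℓ := ⟨interior_subset hint, hℓ⟩
      rw [hK.inter_eq hne] at hmem
      exact hK.ne_zero_of_mem_interior hint hmem
    exact hint
  have hev : ∀ᶠ ε in 𝓝[>] (0 : ℝ), ∀ ℓ, ∀ y ∈ N ∩ K ℓ, y - ε • v ℓ ∈ K ℓ ∧ v ℓ - ε • y ∈ K ℓ :=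
    eventually_all.2 fun ℓ => (eventually_sub_smul_mem (hN.inter_right (hK.isClosed ℓ)) (hNK ℓ)
      (hv ℓ)).filter_mono nhdsWithin_le_nhds
  obtain ⟨ε, hε, hεI⟩ := (hev.and (Ioo_mem_nhdsGT one_pos)).exists
  refine ⟨ε, hεI, v, fun A hA j u hu hu0 => hε _ _ ⟨mem_iUnion.2 ⟨j, (A, normalizeBy w u),
    ⟨hA, ?_⟩, ?_⟩, ?_⟩⟩
  · have hpos := hK.dotProduct_pos hu hu0
    exact ⟨normalizeBy_mem (K := hK.cone j) hu hpos.le, normalizeBy_dotProduct hpos.ne'⟩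
  · exact normalizeBy_mulVec_normalizeBy A (hK.dotProduct_pos hu hu0).ne'
  · exact interior_subset (hK.normalizeBy_mem_interior (htgt A hA j) hu hu0)

section Targets

variable [DecidableEq ι] {tgt : Matrix ι ι ℝ → Function.End (Fin m)}

lemma mapsIntoInteriorUpToSign_prod (hK : IsMulticone S K w)
    (htgt : ∀ A ∈ S, ∀ j, MapsIntoInteriorUpToSign A (K j) (K (tgt A j)))
    {l : List (Matrix ι ι ℝ)} (hl : l ≠ []) (hlS : ∀ A ∈ l, A ∈ S) (j : Fin m) :
    MapsIntoInteriorUpToSign l.prod (K j) (K ((l.map tgt).prod j)) := by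
  induction l with
  | nil => exact absurd rfl hl
  | cons A l ih =>
    obtain ⟨hA, hlS⟩ := List.forall_mem_cons.1 hlS
    rcases eq_or_ne l [] with rfl | hl'
    · simpa using htgt A hA j
    · exact hK.mapsIntoInteriorUpToSign_mul (ih hl' hlS) (htgt A hA _)

lemma normalizeBy_prod_mem (hK : IsMulticone S K w)
    (htgt : ∀ A ∈ S, ∀ j, MapsIntoInteriorUpToSign A (K j) (K (tgt A j)))
    {l : List (Matrix ι ι ℝ)} (hlS : ∀ A ∈ l, A ∈ S) {j : Fin m} {x : ι → ℝ} (hx : x ∈ K j)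
    (hx0 : x ≠ 0) :
    l.prod *ᵥ x ⬝ᵥ w ≠ 0 ∧ normalizeBy w (l.prod *ᵥ x) ∈ K ((l.map tgt).prod j) ∧
      normalizeBy w (l.prod *ᵥ x) ⬝ᵥ w = 1 := by
  rcases eq_or_ne l [] with rfl | hl
  · have hpos := hK.dotProduct_pos hx hx0
    simp only [List.prod_nil, one_mulVec, List.map_nil]
    exact ⟨hpos.ne', normalizeBy_mem (K := hK.cone j) hx hpos.le, normalizeBy_dotProduct hpos.ne'⟩
  · have h := hK.mapsIntoInteriorUpToSign_prod htgt hl hlS j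
    have hne := hK.dotProduct_mulVec_ne_zero h hx hx0
    exact ⟨hne, interior_subset (hK.normalizeBy_mem_interior h hx hx0),
      normalizeBy_dotProduct hne⟩

lemma eq_of_mapsIntoInteriorUpToSign (hK : IsMulticone S K w) {B : Matrix ι ι ℝ} {p q : Fin m}
    (hp : MapsIntoInteriorUpToSign B (K p) (K p)) (hq : MapsIntoInteriorUpToSign B (K q) (K q)) :
    p = q := by
  by_contra hpq
  -- `B` or `-B` maps each cone into its interior, hence `B * B` does so for both
  have hsq : ∀ {j}, MapsIntoInteriorUpToSign B (K j) (K j) →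
      MapsTo (B * B).mulVec (K j \ {0}) (interior (K j)) := by
    intro j h
    have hpos : ∀ {C : Matrix ι ι ℝ}, MapsTo C.mulVec (K j \ {0}) (interior (K j)) →
        MapsTo (C * C).mulVec (K j \ {0}) (interior (K j)) := fun hC u hu => by
      rw [← mulVec_mulVec]
      exact hC ⟨interior_subset (hC hu), hK.ne_zero_of_mem_interior (hC hu)⟩
    rcases hK.mapsTo_or_mapsTo_neg h with h' | h'
    · exact hpos h'
    · simpa using hpos h'
  obtain ⟨c, hc, hcK⟩ := hK.exists_mul_norm_le
  obtain ⟨x, hx, hx0⟩ := hK.exists_mem_ne_zero p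
  obtain ⟨y, hy, hy0⟩ := hK.exists_mem_ne_zero q
  exact false_of_mapsTo_interior (Kp := hK.cone p) (Kq := hK.cone q) (hK.isClosed p)
    (hK.isClosed q) hc (hcK p) (hcK q) hK.dotProduct_self_pos (hK.inter_eq hpq) (hsq hp) (hsq hq)
    hx hx0 hy hy0

lemma prod_map_apply_eq (hK : IsMulticone S K w)
    (htgt : ∀ A ∈ S, ∀ j, MapsIntoInteriorUpToSign A (K j) (K (tgt A j)))
    {l : List (Matrix ι ι ℝ)} (hlS : ∀ A ∈ l, A ∈ S) (hl : m ^ 2 ≤ l.length) (j₁ j₂ : Fin m) :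
    (l.map tgt).prod j₁ = (l.map tgt).prod j₂ :=
  Function.End.list_prod_map_apply_eq tgt l (by simpa using hl) (fun l' hl' hne p q hp hq => by
    have hl'S : ∀ A ∈ l', A ∈ S := fun A hA => hlS A (hl'.subset hA)
    have h := hK.mapsIntoInteriorUpToSign_prod htgt hne hl'S
    have hp' := h p
    have hq' := h q
    rw [hp] at hp'
    rw [hq] at hq'
    exact hK.eq_of_mapsIntoInteriorUpToSign hp' hq') j₁ j₂

lemma dotProduct_prod_mulVec_ne_zero (hK : IsMulticone S K w) {l : List (Matrix ι ι ℝ)}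
    (hl : l ≠ []) (hlS : ∀ A ∈ l, A ∈ S) {j : Fin m} {u : ι → ℝ} (hu : u ∈ K j) (hu0 : u ≠ 0) :
    l.prod *ᵥ u ⬝ᵥ w ≠ 0 := by
  obtain ⟨tgt, htgt⟩ := hK.exists_target
  exact hK.dotProduct_mulVec_ne_zero (hK.mapsIntoInteriorUpToSign_prod htgt hl hlS j) hu hu0

lemma comparable_normalizeBy_prod (hK : IsMulticone S K w)
    (htgt : ∀ A ∈ S, ∀ j, MapsIntoInteriorUpToSign A (K j) (K (tgt A j))) {ε : ℝ}
    (hε : ε ∈ Ioo (0 : ℝ) 1) {v : Fin m → ι → ℝ}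
    (hmin : ∀ A ∈ S, ∀ j, ∀ u ∈ K j, u ≠ 0 →
      normalizeBy w (A *ᵥ u) - ε • v (tgt A j) ∈ K (tgt A j) ∧
        v (tgt A j) - ε • normalizeBy w (A *ᵥ u) ∈ K (tgt A j))
    {l : List (Matrix ι ι ℝ)} (hl : l ≠ []) (hlS : ∀ A ∈ l, A ∈ S) {j : Fin m} {x y : ι → ℝ}
    (hx : x ∈ K j) (hx0 : x ≠ 0) (hy : y ∈ K j) (hy0 : y ≠ 0) :
    Comparable (hK.cone ((l.map tgt).prod j)) (((ε ^ 4)⁻¹ - 1) * (1 - ε ^ 2) ^ (l.length - 1))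
      (normalizeBy w (l.prod *ᵥ x)) (normalizeBy w (l.prod *ᵥ y)) := by
  obtain ⟨hε₀, hε₁⟩ := hε
  induction l with
  | nil => exact absurd rfl hl
  | cons A l ih =>
    obtain ⟨hA, hlS⟩ := List.forall_mem_cons.1 hlS
    rcases eq_or_ne l [] with rfl | hl'
    · obtain ⟨B, hBA, hBpos, hB⟩ := hK.exists_isMinorizing (htgt A hA j) (hmin A hA j)
      have hBx := hBpos x hx hx0
      have hBy := hBpos y hy hy0
      simpa [hBA] using (hB.comparable hε₀ hx hy hBx hBy).normalizeBy hBx hBy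
    · set ℓ := (l.map tgt).prod j
      obtain ⟨hxne, hxK, hx1⟩ := hK.normalizeBy_prod_mem htgt hlS hx hx0
      obtain ⟨hyne, hyK, hy1⟩ := hK.normalizeBy_prod_mem htgt hlS hy hy0
      obtain ⟨B, hBA, hBpos, hB⟩ := hK.exists_isMinorizing (htgt A hA ℓ) (hmin A hA ℓ)
      have hBx := hBpos _ hxK (by rintro h; simp [h] at hx1)
      have hBy := hBpos _ hyK (by rintro h; simp [h] at hy1)
      have hδ : 0 ≤ ((ε ^ 4)⁻¹ - 1) * (1 - ε ^ 2) ^ (l.length - 1) :=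
        mul_nonneg (sub_nonneg.2 ((one_le_inv₀ (by positivity)).2 (pow_le_one₀ hε₀.le hε₁.le)))
          (pow_nonneg (sub_nonneg.2 (pow_le_one₀ hε₀.le hε₁.le)) _)
      have := ((ih hl' hlS).mulVec hB hε₀.le hε₁.le hδ hyK hBy).normalizeBy hBx hBy
      rw [hBA, hBA, normalizeBy_mulVec_normalizeBy A hxne, normalizeBy_mulVec_normalizeBy A hyne,
        mulVec_mulVec, mulVec_mulVec] at this
      have hlen : (A :: l).length - 1 = l.length - 1 + 1 := by
        have := List.length_pos_iff.2 hl'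
        simp only [List.length_cons]; omega
      rw [hlen, show ((ε ^ 4)⁻¹ - 1) * (1 - ε ^ 2) ^ (l.length - 1 + 1) =
        (1 - ε ^ 2) * (((ε ^ 4)⁻¹ - 1) * (1 - ε ^ 2) ^ (l.length - 1)) by ring]
      exact this

lemma norm_normalizeBy_sub_le_of_sq_lt_length (hK : IsMulticone S K w)
    (htgt : ∀ A ∈ S, ∀ j, MapsIntoInteriorUpToSign A (K j) (K (tgt A j))) {ε : ℝ}
    (hε : ε ∈ Ioo (0 : ℝ) 1) {v : Fin m → ι → ℝ}
    (hmin : ∀ A ∈ S, ∀ j, ∀ u ∈ K j, u ≠ 0 →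
      normalizeBy w (A *ᵥ u) - ε • v (tgt A j) ∈ K (tgt A j) ∧
        v (tgt A j) - ε • normalizeBy w (A *ᵥ u) ∈ K (tgt A j))
    {c : ℝ} (hc : 0 < c) (hcK : ∀ j, ∀ x ∈ K j, c * ‖x‖ ≤ x ⬝ᵥ w)
    {l : List (Matrix ι ι ℝ)} (hlS : ∀ A ∈ l, A ∈ S) (hl : m ^ 2 < l.length) {j₁ j₂ : Fin m}
    {x y : ι → ℝ} (hx : x ∈ K j₁) (hx0 : x ≠ 0) (hy : y ∈ K j₂) (hy0 : y ≠ 0) :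
    ‖normalizeBy w (l.prod *ᵥ x) - normalizeBy w (l.prod *ᵥ y)‖ ≤
      2 * ((ε ^ 4)⁻¹ - 1) / c * (1 - ε ^ 2) ^ (l.length - (m ^ 2 + 1)) := by
  -- the first `m ^ 2` letters, `l₁`, bring `x` and `y` into a common cone
  obtain ⟨l₂, l₁, rfl, hl₁⟩ : ∃ l₂ l₁, l = l₂ ++ l₁ ∧ l₁.length = m ^ 2 :=
    ⟨l.take (l.length - m ^ 2), l.drop (l.length - m ^ 2), (List.take_append_drop _ _).symm,
      by simp only [List.length_drop]; omega⟩
  have hl₁S : ∀ A ∈ l₁, A ∈ S := fun A hA => hlS A (List.mem_append_right _ hA)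
  have hl₂S : ∀ A ∈ l₂, A ∈ S := fun A hA => hlS A (List.mem_append_left _ hA)
  have hl₂ : l₂ ≠ [] := by
    rintro rfl
    simp [hl₁] at hl
  obtain ⟨hxne, hxK, hx1⟩ := hK.normalizeBy_prod_mem htgt hl₁S hx hx0
  obtain ⟨hyne, hyK, hy1⟩ := hK.normalizeBy_prod_mem htgt hl₁S hy hy0
  rw [← hK.prod_map_apply_eq htgt hl₁S hl₁.ge j₁ j₂] at hyK
  have hX0 : normalizeBy w (l₁.prod *ᵥ x) ≠ 0 := by rintro h; simp [h] at hx1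
  have hY0 : normalizeBy w (l₁.prod *ᵥ y) ≠ 0 := by rintro h; simp [h] at hy1
  have hcomp := hK.comparable_normalizeBy_prod htgt hε hmin hl₂ hl₂S hxK hX0 hyK hY0
  obtain ⟨-, -, hx1'⟩ := hK.normalizeBy_prod_mem htgt hl₂S hxK hX0
  obtain ⟨-, hyK', hy1'⟩ := hK.normalizeBy_prod_mem htgt hl₂S hyK hY0
  have hd := hcomp.norm_sub_le hyK' hx1' hy1' hc (hcK _)
  rw [normalizeBy_mulVec_normalizeBy _ hxne, normalizeBy_mulVec_normalizeBy _ hyne,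
    mulVec_mulVec, mulVec_mulVec, ← List.prod_append] at hd
  refine hd.trans_eq ?_
  rw [List.length_append, hl₁, show l₂.length + m ^ 2 - (m ^ 2 + 1) = l₂.length - 1 by omega]
  ring

theorem exists_norm_normalizeBy_sub_le (hK : IsMulticone S K w) (hS : IsCompact S) :
    ∃ C₀ > 0, ∃ r ∈ Ioo (0 : ℝ) 1, ∀ l : List (Matrix ι ι ℝ), (∀ A ∈ l, A ∈ S) →
      ∀ j₁ j₂, ∀ x ∈ K j₁, x ≠ 0 → ∀ y ∈ K j₂, y ≠ 0 →
        ‖normalizeBy w (l.prod *ᵥ x) - normalizeBy w (l.prod *ᵥ y)‖ ≤ C₀ * r ^ l.length := by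
  obtain ⟨tgt, htgt⟩ := hK.exists_target
  obtain ⟨c, hc, hcK⟩ := hK.exists_mul_norm_le
  obtain ⟨ε, hε, v, hmin⟩ := hK.exists_minorization hS htgt
  obtain ⟨hε₀, hε₁⟩ := hε
  have hr : 1 - ε ^ 2 ∈ Ioo (0 : ℝ) 1 :=
    ⟨by linarith [pow_lt_one₀ hε₀.le hε₁ two_ne_zero], by linarith [pow_pos hε₀ 2]⟩
  have hε₄ : 1 ≤ (ε ^ 4)⁻¹ := (one_le_inv₀ (by positivity)).2 (pow_le_one₀ hε₀.le hε₁.le)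
  set N := m ^ 2 + 1
  have hC₀ : 0 < 2 * (ε ^ 4)⁻¹ / c / (1 - ε ^ 2) ^ N := div_pos (by positivity) (pow_pos hr.1 N)
  refine ⟨2 * (ε ^ 4)⁻¹ / c / (1 - ε ^ 2) ^ N, hC₀, 1 - ε ^ 2, hr,
    fun l hlS j₁ j₂ x hx hx0 y hy hy0 => ?_⟩
  have hpow : (1 - ε ^ 2) ^ (l.length - N) * (1 - ε ^ 2) ^ N ≤ (1 - ε ^ 2) ^ l.length := by
    rw [← pow_add]
    exact pow_le_pow_of_le_one hr.1.le hr.2.le (le_tsub_add)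
  calc ‖normalizeBy w (l.prod *ᵥ x) - normalizeBy w (l.prod *ᵥ y)‖
      ≤ 2 * (ε ^ 4)⁻¹ / c * (1 - ε ^ 2) ^ (l.length - N) := by
        rcases le_or_gt l.length (m ^ 2) with hl | hl
        · obtain ⟨-, hxK, hx1⟩ := hK.normalizeBy_prod_mem htgt hlS hx hx0
          obtain ⟨-, hyK, hy1⟩ := hK.normalizeBy_prod_mem htgt hlS hy hy0
          have := hcK _ _ hxK
          have := hcK _ _ hyK
          rw [Nat.sub_eq_zero_of_le (by omega), pow_zero, mul_one, le_div_iff₀ hc]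
          nlinarith [norm_sub_le (normalizeBy w (l.prod *ᵥ x)) (normalizeBy w (l.prod *ᵥ y))]
        · refine (hK.norm_normalizeBy_sub_le_of_sq_lt_length htgt ⟨hε₀, hε₁⟩ hmin hc hcK hlS hl hx
            hx0 hy hy0).trans (mul_le_mul_of_nonneg_right ?_ (pow_nonneg hr.1.le _))
          gcongr
          linarith
    _ = 2 * (ε ^ 4)⁻¹ / c / (1 - ε ^ 2) ^ N *
          ((1 - ε ^ 2) ^ (l.length - N) * (1 - ε ^ 2) ^ N) := by
        field_simp [(pow_pos hr.1 N).ne']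
    _ ≤ 2 * (ε ^ 4)⁻¹ / c / (1 - ε ^ 2) ^ N * (1 - ε ^ 2) ^ l.length :=
        mul_le_mul_of_nonneg_left hpow hC₀.le

end Targets

end IsMulticone

theorem stmt7_general {d m : ℕ} (hd : 1 ≤ d)
    (S : Set (Matrix (Fin d) (Fin d) ℝ)) (hScpt : IsCompact S)
    (K : Fin m → Set (Fin d → ℝ)) (w : Fin d → ℝ) (hK : IsMulticone S K w) :
    ∃ C γ : ℝ, 0 < C ∧ 0 < γ ∧
      ∀ n : ℕ, 1 ≤ n → ∀ A : Fin n → Matrix (Fin d) (Fin d) ℝ, (∀ i, A i ∈ S) →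
        ∀ z₁ ∈ ⋃ j, complexify (K j), ∀ z₂ ∈ ⋃ j, complexify (K j),
          z₁ ≠ 0 → z₂ ≠ 0 →
          (∑ i, mulVecC ((List.ofFn A).reverse.prod) z₁ i * (w i : ℂ)) ≠ 0 ∧
          (∑ i, mulVecC ((List.ofFn A).reverse.prod) z₂ i * (w i : ℂ)) ≠ 0 ∧
          _root_.enorm (((∑ i, mulVecC ((List.ofFn A).reverse.prod) z₁ i * (w i : ℂ))⁻¹ •
                mulVecC ((List.ofFn A).reverse.prod) z₁)
              - ((∑ i, mulVecC ((List.ofFn A).reverse.prod) z₂ i * (w i : ℂ))⁻¹ •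
                mulVecC ((List.ofFn A).reverse.prod) z₂))
            ≤ C * Real.exp (-γ * n) := by
  obtain ⟨C₀, hC₀, r, ⟨hr₀, hr₁⟩, hreal⟩ := hK.exists_norm_normalizeBy_sub_le hScpt
  refine ⟨√d * (3 * C₀), -Real.log r, by positivity, neg_pos.2 (Real.log_neg hr₀ hr₁), ?_⟩
  intro n hn A hA z₁ hz₁ z₂ hz₂ hz₁0 hz₂0
  obtain ⟨j₁, hz₁⟩ := mem_iUnion.1 hz₁
  obtain ⟨j₂, hz₂⟩ := mem_iUnion.1 hz₂
  set l := (List.ofFn A).reverse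
  have hlS : ∀ M ∈ l, M ∈ S := by simp [l, List.mem_ofFn, hA]
  have hl : l ≠ [] := by simp [l]; omega
  have hlen : l.length = n := by simp [l]
  have hB : ∀ j, ∀ u ∈ K j, u ≠ 0 → l.prod *ᵥ u ⬝ᵥ w ≠ 0 := fun j u hu hu0 =>
    hK.dotProduct_prod_mulVec_ne_zero hl hlS hu hu0
  have hexp : Real.exp (-(-Real.log r) * n) = r ^ n := by
    rw [neg_neg, mul_comm, Real.exp_nat_mul, Real.exp_log hr₀]
  have := Multicone.enorm_normalizeBy_mulVecC_sub_le (hB j₁) (hB j₂) (δ := C₀ * r ^ n)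
    (fun x hx hx0 y hy hy0 => ?_) hz₁ hz₂ hz₁0 hz₂0
  · rw [Fintype.card_fin] at this
    rwa [hexp, mul_assoc, mul_assoc]
  · obtain ⟨k₁, hx⟩ : ∃ k, x ∈ K k := hx.elim (⟨j₁, ·⟩) (⟨j₂, ·⟩)
    obtain ⟨k₂, hy⟩ : ∃ k, y ∈ K k := hy.elim (⟨j₁, ·⟩) (⟨j₂, ·⟩)
    simpa [hlen] using hreal l hlS k₁ k₂ x hx hx0 y hy hy0

/-- Proposition 3.12 / Theorem 3.1(v): exponential contraction of the projectivised action
of products of matrices from a compact set with a multicone on the complexified cones. -/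
theorem stmt7 {d m : ℕ} (hd : 1 ≤ d) (hm : 0 < m)
    (S : Set (Matrix (Fin d) (Fin d) ℝ)) (hSne : S.Nonempty) (hScpt : IsCompact S)
    (K : Fin m → Set (Fin d → ℝ)) (w : Fin d → ℝ) (hK : IsMulticone S K w) :
    ∃ C γ : ℝ, 0 < C ∧ 0 < γ ∧
      ∀ n : ℕ, 1 ≤ n → ∀ A : Fin n → Matrix (Fin d) (Fin d) ℝ, (∀ i, A i ∈ S) →
        ∀ z₁ ∈ ⋃ j, complexify (K j), ∀ z₂ ∈ ⋃ j, complexify (K j),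
          z₁ ≠ 0 → z₂ ≠ 0 →
          (∑ i, mulVecC ((List.ofFn A).reverse.prod) z₁ i * (w i : ℂ)) ≠ 0 ∧
          (∑ i, mulVecC ((List.ofFn A).reverse.prod) z₂ i * (w i : ℂ)) ≠ 0 ∧
          _root_.enorm (((∑ i, mulVecC ((List.ofFn A).reverse.prod) z₁ i * (w i : ℂ))⁻¹ •
                mulVecC ((List.ofFn A).reverse.prod) z₁)
              - ((∑ i, mulVecC ((List.ofFn A).reverse.prod) z₂ i * (w i : ℂ))⁻¹ •
                mulVecC ((List.ofFn A).reverse.prod) z₂))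
            ≤ C * Real.exp (-γ * n) :=
  stmt7_general hd S hScpt K w hK
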